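/- Let G^C be a C-DAG with nonempty compatible class, G_can its canonical compatible graph, and G_u its unfolded graph. Let W^C, X^C, Y^C, Z^C be pairwise disjoint sets of clusters, with W^m, X^m, Y^m, Z^m the corresponding unions of clusters. Suppose the mutilated unfolded graph (G_u)_{W̄^m} contains a structure of interest σ that connects X^m and Y^m under W^m ∪ Z^m, with Root(σ) ⊆ W^m ∪ Z^m ∪ Y^m, and such that G_can ∪ σ is acyclic. Then there exists an ADMG G^m compatible with G^C in which X^m and Y^m are d-connected given W^m ∪ Z^m in the mutilated graph G^m_{W̄^m, X̄^m(Z^m)}, where X^m(Z^m) := X^m \ Anc(Z^m, G^m_{W̄^m}); that is, the third rule of Pearl's do-calculus fails in G^m. -/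

import Mathlib

/-!  Mixed graphs, ADMGs, d-separation, structures of interest, and cluster DAGs
(following Anand et al. and the cyclic C-DAG extension). -/

/-- The way an edge is traversed along a path: `fwd` = directed edge pointing
towards the right endpoint, `bwd` = directed edge pointing towards the left
endpoint, `both` = bidirected edge (arrowheads at both endpoints). -/
inductive Link : Type
  | fwd
  | bwd
  | both
  deriving DecidableEq

/-- Is there an arrowhead at the right endpoint of the link? -/
def Link.headRight : Link → Bool
  | .fwd => true
  | .bwd => false
  | .both => true

/-- Is there an arrowhead at the left endpoint of the link? -/
def Link.headLeft : Link → Bool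
  | .fwd => false
  | .bwd => true
  | .both => true

/-- A mixed graph on a vertex set `verts`: a set of directed edges and a
(symmetric) set of bidirected edges, all between vertices of `verts`. -/
structure MixedGraph (V : Type*) where
  verts : Set V
  dir : V → V → Prop
  bi : V → V → Prop
  dir_mem : ∀ ⦃a b : V⦄, dir a b → a ∈ verts ∧ b ∈ verts
  bi_mem : ∀ ⦃a b : V⦄, bi a b → a ∈ verts ∧ b ∈ verts
  bi_symm : ∀ ⦃a b : V⦄, bi a b → bi b a

namespace MixedGraph

variable {V C : Type*}

/-- `G.Anc v w` : there is a directed path from `v` to `w`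
(`v` is an ancestor of `w`, `w` a descendant of `v`). -/
def Anc (G : MixedGraph V) : V → V → Prop := Relation.ReflTransGen G.dir

/-- The set of ancestors of the set `Z` in `G`. -/
def AncSet (G : MixedGraph V) (Z : Set V) : Set V := {v | ∃ z ∈ Z, G.Anc v z}

/-- The directed part of `G` has no directed cycle. -/
def Acyclic (G : MixedGraph V) : Prop := ∀ ⦃a b : V⦄, G.dir a b → ¬ G.Anc b a

/-- An acyclic directed mixed graph: no directed cycle, and all edges join
distinct vertices. -/
def IsADMG (G : MixedGraph V) : Prop :=
  G.Acyclic ∧ (∀ v, ¬ G.dir v v) ∧ (∀ v, ¬ G.bi v v)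

/-- `H` is a subgraph of `G`. -/
def IsSubgraph (H G : MixedGraph V) : Prop :=
  H.verts ⊆ G.verts ∧ (∀ ⦃a b : V⦄, H.dir a b → G.dir a b) ∧
    (∀ ⦃a b : V⦄, H.bi a b → G.bi a b)

/-- Adjacency, viewing all edges as undirected. -/
def Adj (G : MixedGraph V) (a b : V) : Prop := G.dir a b ∨ G.dir b a ∨ G.bi a b

/-- `G` has a single connected component (viewing all edges as undirected). -/
def Connected (G : MixedGraph V) : Prop :=
  G.verts.Nonempty ∧ ∀ a ∈ G.verts, ∀ b ∈ G.verts, Relation.ReflTransGen G.Adj a b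

/-- A root: a vertex with no outgoing directed edge. -/
def IsRoot (G : MixedGraph V) (v : V) : Prop := v ∈ G.verts ∧ ∀ w, ¬ G.dir v w

/-- The set of roots of `G`. -/
def roots (G : MixedGraph V) : Set V := {v | G.IsRoot v}

/-- A structure of interest: an ADMG with a single connected component in which
every vertex has at most one outgoing directed edge, or exactly two outgoing
directed edges and no edge with an arrowhead at it. -/
def IsSOI (σ : MixedGraph V) : Prop :=
  σ.IsADMG ∧ σ.Connected ∧
    ∀ v ∈ σ.verts,
      (∀ ⦃w₁ w₂ : V⦄, σ.dir v w₁ → σ.dir v w₂ → w₁ = w₂) ∨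
      ((∃ w₁ w₂, w₁ ≠ w₂ ∧ σ.dir v w₁ ∧ σ.dir v w₂ ∧
          ∀ w, σ.dir v w → w = w₁ ∨ w = w₂) ∧
        (∀ w, ¬ σ.dir w v) ∧ (∀ w, ¬ σ.bi v w))

/-- A structure of interest `σ` (as a subgraph of the ambient graph) connects
`X` and `Y` under `Z`: it contains a vertex of `X` and a vertex of `Y`, its
roots lie in `X ∪ Y ∪ Z`, and no non-root vertex of `σ` lies in `Z`. -/
def Connects (σ : MixedGraph V) (X Y Z : Set V) : Prop :=
  (σ.verts ∩ X).Nonempty ∧ (σ.verts ∩ Y).Nonempty ∧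
    σ.roots ⊆ X ∪ Y ∪ Z ∧ ∀ v ∈ σ.verts, ¬ σ.IsRoot v → v ∉ Z

/-- The link `l` joins `a` (left) to `b` (right) in `G`. -/
def LinkOk (G : MixedGraph V) (a : V) (l : Link) (b : V) : Prop :=
  match l with
  | .fwd => G.dir a b
  | .bwd => G.dir b a
  | .both => G.bi a b

/-- A walk from `a`, given as the list of successive (link, next vertex) steps. -/
inductive IsWalk (G : MixedGraph V) : V → List (Link × V) → Prop
  | nil (v : V) : IsWalk G v []
  | cons {a b : V} {l : Link} {rest : List (Link × V)} :
      G.LinkOk a l b → IsWalk G b rest → IsWalk G a ((l, b) :: rest)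

/-- The vertices visited by a walk. -/
def pathVerts (a : V) (steps : List (Link × V)) : List V := a :: steps.map Prod.snd

/-- The last vertex of a walk. -/
def lastVert (a : V) (steps : List (Link × V)) : V := (steps.map Prod.snd).getLastD a

/-- A path: a walk visiting pairwise distinct vertices. -/
def IsPath (G : MixedGraph V) (a : V) (steps : List (Link × V)) : Prop :=
  G.IsWalk a steps ∧ (pathVerts a steps).Nodup

/-- Activity of the interior vertex `v`, flanked by links `l₁` and `l₂`,
relative to `Z` : if `v` is a collider it must be an ancestor of `Z`
(in particular possibly in `Z`), otherwise it must avoid `Z`. -/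
def ActiveTriple (G : MixedGraph V) (Z : Set V) (l₁ : Link) (v : V) (l₂ : Link) : Prop :=
  if l₁.headRight && l₂.headLeft then v ∈ G.AncSet Z else v ∉ Z

/-- `X` and `Y` are d-connected given `Z` in `G`: some path from a vertex of
`X` to a vertex of `Y` is active given `Z`. -/
def DConnected (G : MixedGraph V) (X Y Z : Set V) : Prop :=
  ∃ (a : V) (steps : List (Link × V)),
    G.IsPath a steps ∧ a ∈ X ∧ lastVert a steps ∈ Y ∧
    a ∉ Z ∧ lastVert a steps ∉ Z ∧
    List.Chain' (fun s t => G.ActiveTriple Z s.1 s.2 t.1) steps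

/-- The mutilated graph `G_{Ā,B̲}` : every edge with an arrowhead at a vertex
of `A` and every directed edge out of a vertex of `B` is deleted. -/
def mutilate (G : MixedGraph V) (A B : Set V) : MixedGraph V where
  verts := G.verts
  dir a b := G.dir a b ∧ b ∉ A ∧ a ∉ B
  bi a b := G.bi a b ∧ a ∉ A ∧ b ∉ A
  dir_mem := fun _ _ h => G.dir_mem h.1
  bi_mem := fun _ _ h => G.bi_mem h.1
  bi_symm := fun _ _ h => ⟨G.bi_symm h.1, h.2.2, h.2.1⟩

/-- Union of two mixed graphs. -/
def union (G H : MixedGraph V) : MixedGraph V where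
  verts := G.verts ∪ H.verts
  dir a b := G.dir a b ∨ H.dir a b
  bi a b := G.bi a b ∨ H.bi a b
  dir_mem := by
    rintro a b (h | h)
    · exact ⟨Or.inl (G.dir_mem h).1, Or.inl (G.dir_mem h).2⟩
    · exact ⟨Or.inr (H.dir_mem h).1, Or.inr (H.dir_mem h).2⟩
  bi_mem := by
    rintro a b (h | h)
    · exact ⟨Or.inl (G.bi_mem h).1, Or.inl (G.bi_mem h).2⟩
    · exact ⟨Or.inr (H.bi_mem h).1, Or.inr (H.bi_mem h).2⟩
  bi_symm := by
    rintro a b (h | h)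
    · exact Or.inl (G.bi_symm h)
    · exact Or.inr (H.bi_symm h)

/-- Add the directed edge `x → y`. -/
def addDir (G : MixedGraph V) (x y : V) : MixedGraph V where
  verts := G.verts ∪ {x, y}
  dir a b := G.dir a b ∨ (a = x ∧ b = y)
  bi := G.bi
  dir_mem := by
    rintro a b (h | ⟨rfl, rfl⟩)
    · exact ⟨Or.inl (G.dir_mem h).1, Or.inl (G.dir_mem h).2⟩
    · exact ⟨Or.inr (by simp), Or.inr (by simp)⟩
  bi_mem := fun _ _ h => ⟨Or.inl (G.bi_mem h).1, Or.inl (G.bi_mem h).2⟩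
  bi_symm := fun _ _ h => G.bi_symm h

/-- Add the bidirected edge `x ↔ y`. -/
def addBi (G : MixedGraph V) (x y : V) : MixedGraph V where
  verts := G.verts ∪ {x, y}
  dir := G.dir
  bi a b := G.bi a b ∨ (a = x ∧ b = y) ∨ (a = y ∧ b = x)
  dir_mem := fun _ _ h => ⟨Or.inl (G.dir_mem h).1, Or.inl (G.dir_mem h).2⟩
  bi_mem := by
    rintro a b (h | ⟨rfl, rfl⟩ | ⟨rfl, rfl⟩)
    · exact ⟨Or.inl (G.bi_mem h).1, Or.inl (G.bi_mem h).2⟩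
    · exact ⟨Or.inr (by simp), Or.inr (by simp)⟩
    · exact ⟨Or.inr (by simp), Or.inr (by simp)⟩
  bi_symm := by
    rintro a b (h | ⟨rfl, rfl⟩ | ⟨rfl, rfl⟩)
    · exact Or.inl (G.bi_symm h)
    · exact Or.inr (Or.inr ⟨rfl, rfl⟩)
    · exact Or.inr (Or.inl ⟨rfl, rfl⟩)

/-- Delete the directed edge `x → y`. -/
def deleteDir (G : MixedGraph V) (x y : V) : MixedGraph V where
  verts := G.verts
  dir a b := G.dir a b ∧ ¬(a = x ∧ b = y)
  bi := G.bi
  dir_mem := fun _ _ h => G.dir_mem h.1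
  bi_mem := fun _ _ h => G.bi_mem h
  bi_symm := fun _ _ h => G.bi_symm h

/-- Delete the bidirected edge `x ↔ y`. -/
def deleteBi (G : MixedGraph V) (x y : V) : MixedGraph V where
  verts := G.verts
  dir := G.dir
  bi a b := G.bi a b ∧ ¬((a = x ∧ b = y) ∨ (a = y ∧ b = x))
  dir_mem := fun _ _ h => G.dir_mem h
  bi_mem := fun _ _ h => G.bi_mem h.1
  bi_symm := fun _ _ h => ⟨G.bi_symm h.1, fun hc => h.2 (by tauto)⟩

/-- The cluster of micro-variables assigned to the cluster label `c`. -/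
def clusterOf (π : V → C) (c : C) : Set V := {v | π v = c}

/-- `G` (an ADMG on all of `V`) is compatible with the cluster-level mixed
graph `GC` : `GC` is exactly the cluster graph induced by `G` via the
partition `π`. -/
def Compatible (π : V → C) (GC : MixedGraph C) (G : MixedGraph V) : Prop :=
  G.IsADMG ∧ G.verts = Set.univ ∧
    (∀ c d, GC.dir c d ↔ ∃ a b, π a = c ∧ π b = d ∧ G.dir a b) ∧
    (∀ c d, GC.bi c d ↔ ∃ a b, π a = c ∧ π b = d ∧ G.bi a b)

/-- Within each cluster, the indices of the vertices (given by the ambient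
linear order on `V`) follow a topological order of `G`. -/
def FollowsTopo [LinearOrder V] (π : V → C) (G : MixedGraph V) : Prop :=
  ∃ t : V → ℕ, Function.Injective t ∧ (∀ ⦃a b : V⦄, G.dir a b → t a < t b) ∧
    ∀ ⦃a b : V⦄, π a = π b → a < b → t a < t b

/-- The cluster `c` has cardinality at most one. -/
def SingletonCluster (π : V → C) (c : C) : Prop :=
  ∀ ⦃a b : V⦄, π a = c → π b = c → a = b

/-- `GC` contains a directed cycle all of whose clusters have cardinality 1. -/
def HasSingletonCycle (π : V → C) (GC : MixedGraph C) : Prop :=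
  ∃ c, Relation.TransGen
    (fun c₁ c₂ => GC.dir c₁ c₂ ∧ SingletonCluster π c₁ ∧ SingletonCluster π c₂) c c

/-- The canonical compatible graph of `GC` : all bidirected edges between the
relevant clusters; for self-loops all within-cluster edges following the index
order; for each directed edge between distinct clusters the edge from the
first vertex of the source to the last vertex of the target. -/
def canonicalGraph [LinearOrder V] (π : V → C) (GC : MixedGraph C) : MixedGraph V where
  verts := Set.univ
  dir a b :=
    (π a = π b ∧ GC.dir (π a) (π b) ∧ a < b) ∨
    (π a ≠ π b ∧ GC.dir (π a) (π b) ∧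
      IsLeast (clusterOf π (π a)) a ∧ IsGreatest (clusterOf π (π b)) b)
  bi a b := a ≠ b ∧ GC.bi (π a) (π b)
  dir_mem := fun _ _ _ => ⟨trivial, trivial⟩
  bi_mem := fun _ _ _ => ⟨trivial, trivial⟩
  bi_symm := fun _ _ h => ⟨h.1.symm, GC.bi_symm h.2⟩

/-- The unfolded graph of `GC` : the canonical compatible graph together with
all eligible directed edges, i.e. those corresponding to a cluster-level
directed edge whose addition to the canonical graph creates no directed
cycle. -/
def unfoldedGraph [LinearOrder V] (π : V → C) (GC : MixedGraph C) : MixedGraph V where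
  verts := Set.univ
  dir a b := (canonicalGraph π GC).dir a b ∨
    (GC.dir (π a) (π b) ∧ ((canonicalGraph π GC).addDir a b).Acyclic)
  bi a b := (canonicalGraph π GC).bi a b
  dir_mem := fun _ _ _ => ⟨trivial, trivial⟩
  bi_mem := fun _ _ _ => ⟨trivial, trivial⟩
  bi_symm := fun _ _ h => (canonicalGraph π GC).bi_symm h

/-- Failure of rule `i` of Pearl's calculus (atomically) in `G` :
`0` ↦ rule 1, `1` ↦ rule 2, `2` ↦ rule 3. -/
def RuleFails (G : MixedGraph V) (W X Y Z : Set V) (i : Fin 3) : Prop :=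
  if i = 0 then (G.mutilate W ∅).DConnected X Y (W ∪ Z)
  else if i = 1 then (G.mutilate W X).DConnected X Y (W ∪ Z)
  else (G.mutilate (W ∪ (X \ (G.mutilate W ∅).AncSet Z)) ∅).DConnected X Y (W ∪ Z)

end MixedGraph


/-!
Take `G := G_can ∪ σ`; it is compatible with `G^C` because `G_can` already realizes every
cluster edge and every edge of `σ` projects onto one. Write `Z' := W ∪ Z` and let `H` be `G`
with the arrowheads into `W ∪ (X \ Anc(Z, G_W̄))` removed. Following `σ` downward from any vertex
one reaches a root, which lies in `Z'` or in `Y`. If some vertex of `σ` lies in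
`X \ Anc(Z, G_W̄)`, the directed `σ`-path from a lowest such vertex to a root is a directed
`H`-path into `Y`. Otherwise all of `σ` survives in `H`, and walking along `σ` from a vertex in
`X` to one in `Y`, detouring down a directed path into `Y` at every vertex that is not an
ancestor of `Z'`, gives an active walk, which in an acyclic graph can be shortened to an active
path.
-/

theorem List.exists_eq_append_cons_append_cons_of_not_nodup_map {α β : Type*} {f : α → β} :
    ∀ {l : List α}, ¬ (l.map f).Nodup →
      ∃ l₁ x l₂ y l₃, l = l₁ ++ x :: (l₂ ++ y :: l₃) ∧ f x = f y
  | [], h => absurd List.nodup_nil h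
  | s :: l, h => by
    rw [List.map_cons, List.nodup_cons, not_and_or, not_not] at h
    rcases h with hmem | h
    · obtain ⟨y, hy, hfy⟩ := List.mem_map.1 hmem
      obtain ⟨l₂, l₃, rfl⟩ := List.append_of_mem hy
      exact ⟨[], s, l₂, y, l₃, rfl, hfy.symm⟩
    · obtain ⟨l₁, x, l₂, y, l₃, rfl, hxy⟩ := exists_eq_append_cons_append_cons_of_not_nodup_map h
      exact ⟨s :: l₁, x, l₂, y, l₃, rfl, hxy⟩

namespace MixedGraph

open Relation

variable {V : Type*} {G H σ : MixedGraph V} {X Y Z : Set V}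

section Walks

@[simp]
lemma lastVert_nil (a : V) : lastVert a [] = a := rfl

@[simp]
lemma lastVert_cons (a : V) (s : Link × V) (S : List (Link × V)) :
    lastVert a (s :: S) = lastVert s.2 S := by
  simp only [lastVert, List.map_cons, List.getLastD_cons]

lemma lastVert_append (a : V) (S T : List (Link × V)) :
    lastVert a (S ++ T) = lastVert (lastVert a S) T := by
  induction S generalizing a with
  | nil => rfl
  | cons s S ih => simp only [List.cons_append, lastVert_cons, ih]

lemma isWalk_cons_iff {a b : V} {l : Link} {S : List (Link × V)} :
    G.IsWalk a ((l, b) :: S) ↔ G.LinkOk a l b ∧ G.IsWalk b S :=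
  ⟨fun | .cons hl hw => ⟨hl, hw⟩, fun h => .cons h.1 h.2⟩

lemma isWalk_append_iff {a : V} {S T : List (Link × V)} :
    G.IsWalk a (S ++ T) ↔ G.IsWalk a S ∧ G.IsWalk (lastVert a S) T := by
  induction S generalizing a with
  | nil => exact ⟨fun h => ⟨.nil a, h⟩, And.right⟩
  | cons s S ih =>
    obtain ⟨l, b⟩ := s
    rw [List.cons_append, isWalk_cons_iff, isWalk_cons_iff, ih, lastVert_cons, and_assoc]

lemma IsSubgraph.linkOk (h : σ.IsSubgraph G) {a b : V} :
    ∀ {l : Link}, σ.LinkOk a l b → G.LinkOk a l b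
  | .fwd, hl => h.2.1 hl
  | .bwd, hl => h.2.1 hl
  | .both, hl => h.2.2 hl

end Walks

section Ancestors

lemma mem_ancSet_of_anc {a b : V} (hab : G.Anc a b) (hb : b ∈ G.AncSet Z) : a ∈ G.AncSet Z :=
  let ⟨z, hz, hbz⟩ := hb
  ⟨z, hz, hab.trans hbz⟩

lemma Acyclic.anti (hG : G.Acyclic) (hHG : ∀ ⦃a b : V⦄, H.dir a b → G.dir a b) : H.Acyclic :=
  fun _ _ hab hba => hG (hHG hab) (ReflTransGen.mono (fun _ _ h => hHG h) _ _ hba)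

lemma Acyclic.wellFounded [Finite V] (hG : G.Acyclic) :
    WellFounded (fun a b => TransGen G.dir b a) :=
  have : IsTrans V (fun a b => TransGen G.dir b a) := ⟨fun _ _ _ hab hbc => hbc.trans hab⟩
  have : Std.Irrefl (fun a b => TransGen G.dir b a) :=
    ⟨fun _ h => let ⟨_, hab, hba⟩ := TransGen.head'_iff.1 h; hG hab hba⟩
  Finite.wellFounded_of_trans_of_irrefl _

lemma Acyclic.exists_isRoot [Finite V] (hG : G.Acyclic) {v : V} (hv : v ∈ G.verts) :
    ∃ r, G.IsRoot r ∧ G.Anc v r := by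
  obtain ⟨r, hvr, hmax⟩ := hG.wellFounded.has_min {w | G.Anc v w} ⟨v, .refl⟩
  refine ⟨r, ⟨?_, fun w hrw => hmax w (ReflTransGen.tail hvr hrw) (.single hrw)⟩, hvr⟩
  rcases hvr.cases_tail with rfl | ⟨_, -, h⟩
  exacts [hv, (G.dir_mem h).2]

end Ancestors

section Activity

def Active (G : MixedGraph V) (Z : Set V) (S : List (Link × V)) : Prop :=
  S.IsChain fun s t => G.ActiveTriple Z s.1 s.2 t.1

lemma ActiveTriple.of_fwd {l m : Link} {v : V} (h : G.ActiveTriple Z .fwd v m)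
    (hl : l = .bwd → v ∉ Z) : G.ActiveTriple Z l v m := by
  cases l <;> cases m <;> simp_all [ActiveTriple, Link.headRight, Link.headLeft]

lemma Active.cons_of_imp {l₁ l₂ : Link} {v : V} {S : List (Link × V)}
    (h : G.Active Z ((l₁, v) :: S))
    (himp : ∀ m, G.ActiveTriple Z l₁ v m → G.ActiveTriple Z l₂ v m) :
    G.Active Z ((l₂, v) :: S) := by
  rw [Active, List.isChain_cons] at h ⊢
  exact ⟨fun t ht => himp _ (h.1 t ht), h.2⟩

/-- An active walk that leaves `c` along a directed edge cannot come back up to `c` without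
passing a collider below `c`. -/
lemma mem_ancSet_of_active_walk (hG : G.Acyclic) {c u : V} {S : List (Link × V)}
    (hw : G.IsWalk c ((.fwd, u) :: S)) (ha : G.Active Z ((.fwd, u) :: S))
    (hlast : G.Anc (lastVert u S) c) : c ∈ G.AncSet Z := by
  induction S generalizing c u with
  | nil => exact absurd hlast (hG (isWalk_cons_iff.1 hw).1)
  | cons s S ih =>
    obtain ⟨m, w⟩ := s
    rw [lastVert_cons] at hlast
    obtain ⟨hcu, hw⟩ := isWalk_cons_iff.1 hw
    obtain ⟨htriple, ha⟩ := List.isChain_cons_cons.1 ha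
    refine mem_ancSet_of_anc (.single hcu) ?_
    cases m with
    | fwd => exact ih hw ha (hlast.tail hcu)
    | bwd | both => exact htriple

/-- Cutting a closed walk `C` at `v` out of an active walk keeps the triple at `v` active. -/
lemma activeTriple_of_closed_walk (hG : G.Acyclic) {l₁ l₂ m : Link} {v : V}
    {C : List (Link × V)} (hC : C ≠ []) (hw : G.IsWalk v C) (ha : G.Active Z ((l₁, v) :: C))
    (hlast : lastVert v C = v) (h₂ : G.ActiveTriple Z l₂ v m) : G.ActiveTriple Z l₁ v m := by
  obtain ⟨⟨m₁, u⟩, T, rfl⟩ := List.exists_cons_of_ne_nil hC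
  obtain ⟨h₁, ha⟩ := List.isChain_cons_cons.1 ha
  have hback : m₁ = .fwd → v ∈ G.AncSet Z := by
    rintro rfl
    rw [lastVert_cons] at hlast
    exact mem_ancSet_of_active_walk hG hw ha (hlast ▸ .refl)
  cases l₁ <;> cases m <;> cases m₁ <;>
    simp_all [ActiveTriple, Link.headRight, Link.headLeft]

lemma exists_shorter_of_mem {a : V} {S : List (Link × V)} (hw : G.IsWalk a S)
    (ha : G.Active Z S) (hmem : a ∈ S.map Prod.snd) :
    ∃ T, T.length < S.length ∧ G.IsWalk a T ∧ G.Active Z T ∧ lastVert a T = lastVert a S := by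
  obtain ⟨⟨l, b⟩, hb, rfl : b = a⟩ := List.mem_map.1 hmem
  obtain ⟨S₁, S₂, rfl⟩ := List.append_of_mem hb
  refine ⟨S₂, by simp only [List.length_append, List.length_cons]; omega, ?_,
    List.IsChain.suffix ha ⟨S₁ ++ [(l, b)], by simp⟩, by
    rw [lastVert_append, lastVert_cons]⟩
  exact (isWalk_cons_iff.1 (isWalk_append_iff.1 hw).2).2

lemma exists_shorter_of_not_nodup (hG : G.Acyclic) {a : V} {S : List (Link × V)}
    (hw : G.IsWalk a S) (ha : G.Active Z S) (hnd : ¬ (S.map Prod.snd).Nodup) :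
    ∃ T, T.length < S.length ∧ G.IsWalk a T ∧ G.Active Z T ∧ lastVert a T = lastVert a S := by
  obtain ⟨S₁, ⟨l₁, v⟩, S₂, ⟨l₂, w⟩, S₃, rfl, rfl : v = w⟩ :=
    List.exists_eq_append_cons_append_cons_of_not_nodup_map hnd
  obtain ⟨hw₁, hw⟩ := isWalk_append_iff.1 hw
  obtain ⟨hl₁, hw⟩ := isWalk_cons_iff.1 hw
  obtain ⟨hw₂, hw⟩ := isWalk_append_iff.1 hw
  obtain ⟨ha₁, ha⟩ := List.isChain_split.1 ha
  obtain ⟨haC, ha₃⟩ := List.isChain_cons_split.1 ha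
  have hC : G.IsWalk v (S₂ ++ [(l₂, v)]) :=
    isWalk_append_iff.2 ⟨hw₂, .cons (isWalk_cons_iff.1 hw).1 (.nil v)⟩
  refine ⟨S₁ ++ (l₁, v) :: S₃, by simp, isWalk_append_iff.2 ⟨hw₁, .cons hl₁ (isWalk_cons_iff.1 hw).2⟩,
    List.isChain_split.2 ⟨ha₁, Active.cons_of_imp ha₃ fun m h₂ => ?_⟩, by
      simp only [lastVert_append, lastVert_cons]⟩
  exact activeTriple_of_closed_walk hG (by simp) hC haC (by simp [lastVert_append]) h₂

lemma exists_shorter_active_walk (hG : G.Acyclic) {a : V} {S : List (Link × V)}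
    (hw : G.IsWalk a S) (ha : G.Active Z S) (hnd : ¬ (pathVerts a S).Nodup) :
    ∃ T, T.length < S.length ∧ G.IsWalk a T ∧ G.Active Z T ∧ lastVert a T = lastVert a S := by
  rw [pathVerts, List.nodup_cons, not_and_or, not_not] at hnd
  rcases hnd with hmem | hnd
  exacts [exists_shorter_of_mem hw ha hmem, exists_shorter_of_not_nodup hG hw ha hnd]

theorem dConnected_of_active_walk (hG : G.Acyclic) {a : V} {S : List (Link × V)}
    (hw : G.IsWalk a S) (ha : G.Active Z S) (haX : a ∈ X) (hY : lastVert a S ∈ Y)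
    (haZ : a ∉ Z) (hZ : lastVert a S ∉ Z) : G.DConnected X Y Z := by
  by_cases hnd : (pathVerts a S).Nodup
  · exact ⟨a, S, ⟨hw, hnd⟩, haX, hY, haZ, hZ, ha⟩
  · obtain ⟨T, hlt, hwT, haT, hT⟩ := exists_shorter_active_walk hG hw ha hnd
    exact dConnected_of_active_walk hG hwT haT haX (hT ▸ hY) haZ (hT ▸ hZ)
termination_by S.length

/-- `G.Active Z ((.fwd, v) :: S)` says that the walk `S` from `v` stays active when it is entered
at `v` through an arrowhead. -/
lemma exists_active_walk_of_reflTransGen {v w : V}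
    (h : ReflTransGen (fun a b => G.dir a b ∧ a ∉ Z) v w) :
    ∃ S, G.IsWalk v S ∧ lastVert v S = w ∧ G.Active Z ((.fwd, v) :: S) := by
  induction h using ReflTransGen.head_induction_on with
  | refl => exact ⟨[], .nil w, rfl, List.isChain_singleton _⟩
  | head hab _ ih =>
    obtain ⟨S, hw, hlast, ha⟩ := ih
    exact ⟨(.fwd, _) :: S, .cons (l := .fwd) hab.1 hw, by rwa [lastVert_cons],
      List.isChain_cons_cons.2 ⟨hab.2, ha⟩⟩

theorem dConnected_of_reflTransGen (hG : G.Acyclic) {x y : V}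
    (h : ReflTransGen (fun a b => G.dir a b ∧ a ∉ Z) x y) (hx : x ∈ X) (hy : y ∈ Y)
    (hxZ : x ∉ Z) (hyZ : y ∉ Z) : G.DConnected X Y Z := by
  obtain ⟨S, hw, rfl, ha⟩ := exists_active_walk_of_reflTransGen h
  exact dConnected_of_active_walk hG hw ha.tail hx hy hxZ hyZ

end Activity

section Connects

lemma Connects.not_mem_of_dir (hconn : σ.Connects X Y Z) {a b : V} (hab : σ.dir a b) :
    a ∉ Z :=
  hconn.2.2.2 a (σ.dir_mem hab).1 fun hr => hr.2 b hab

lemma mem_ancSet_or_exists_active_walk [Finite V] (hG : G.Acyclic) (hσG : σ.IsSubgraph G)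
    (hconn : σ.Connects X Y Z) (hroots : σ.roots ⊆ Z ∪ Y) {v : V} (hv : v ∈ σ.verts) :
    v ∈ G.AncSet Z ∨ ∃ S, G.IsWalk v S ∧ lastVert v S ∈ Y ∧ G.Active Z ((.fwd, v) :: S) := by
  obtain ⟨r, hr, hvr⟩ := (hG.anti hσG.2.1).exists_isRoot hv
  have hpath : ReflTransGen (fun a b => G.dir a b ∧ a ∉ Z) v r :=
    ReflTransGen.mono (fun _ _ h => ⟨hσG.2.1 h, hconn.not_mem_of_dir h⟩) _ _ hvr
  rcases hroots hr with hrZ | hrY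
  · exact .inl ⟨r, hrZ, ReflTransGen.mono (fun _ _ h => h.1) _ _ hpath⟩
  · obtain ⟨S, hw, rfl, ha⟩ := exists_active_walk_of_reflTransGen hpath
    exact .inr ⟨S, hw, hrY, ha⟩

/-- Prepending an edge `a — c` of `σ`: if `a` is an ancestor of `Z`, any link works, since an
arrowhead at `a` makes it a collider and otherwise `a` is the tail of an edge of `σ`. -/
lemma exists_active_walk_of_adj [Finite V] (hG : G.Acyclic) (hσG : σ.IsSubgraph G)
    (hconn : σ.Connects X Y Z) (hroots : σ.roots ⊆ Z ∪ Y) {a c : V} (hac : σ.Adj a c)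
    (hc : ∃ S, G.IsWalk c S ∧ lastVert c S ∈ Y ∧ G.Active Z ((.fwd, c) :: S)) :
    ∃ S, G.IsWalk a S ∧ lastVert a S ∈ Y ∧ G.Active Z ((.fwd, a) :: S) := by
  obtain ⟨l, hl, hfwd, hbwd⟩ :
      ∃ l, σ.LinkOk a l c ∧ (l = .fwd → a ∉ Z) ∧ (l = .bwd → c ∉ Z) := by
    rcases hac with h | h | h
    exacts [⟨.fwd, h, fun _ => hconn.not_mem_of_dir h, nofun⟩,
      ⟨.bwd, h, nofun, fun _ => hconn.not_mem_of_dir h⟩, ⟨.both, h, nofun, nofun⟩]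
  have ha : a ∈ σ.verts := by
    rcases hac with h | h | h
    exacts [(σ.dir_mem h).1, (σ.dir_mem h).2, (σ.bi_mem h).1]
  rcases mem_ancSet_or_exists_active_walk hG hσG hconn hroots ha with hanc | hesc
  · obtain ⟨S, hw, hY, hS⟩ := hc
    refine ⟨(l, c) :: S, .cons (hσG.linkOk hl) hw, by rwa [lastVert_cons], List.isChain_cons_cons.2 ⟨?_, ?_⟩⟩
    · cases l
      exacts [hfwd rfl, hanc, hanc]
    · exact hS.cons_of_imp fun m h => h.of_fwd hbwd
  · exact hesc

theorem Connects.dConnected [Finite V] (hconn : σ.Connects X Y Z) (hG : G.Acyclic)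
    (hσG : σ.IsSubgraph G) (hσ : σ.Connected) (hroots : σ.roots ⊆ Z ∪ Y)
    (hXZ : Disjoint X Z) (hYZ : Disjoint Y Z) : G.DConnected X Y Z := by
  obtain ⟨x, hxσ, hxX⟩ := hconn.1
  obtain ⟨y, hyσ, hyY⟩ := hconn.2.1
  have key : ∀ v, ReflTransGen σ.Adj v y →
      ∃ S, G.IsWalk v S ∧ lastVert v S ∈ Y ∧ G.Active Z ((.fwd, v) :: S) := by
    intro v hv
    induction hv using ReflTransGen.head_induction_on with
    | refl => exact ⟨[], .nil y, hyY, List.isChain_singleton _⟩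
    | head hac _ ih => exact exists_active_walk_of_adj hG hσG hconn hroots hac ih
  obtain ⟨S, hw, hY, ha⟩ := key x (hσ.2 x hxσ y hyσ)
  exact dConnected_of_active_walk hG hw ha.tail hxX hY (Set.disjoint_left.1 hXZ hxX)
    (Set.disjoint_left.1 hYZ hY)

end Connects

section Mutilation

variable {W : Set V}

lemma IsSubgraph.mutilate_union {A B : Set V} (h : σ.IsSubgraph (H.mutilate A B)) :
    σ.IsSubgraph ((G.union σ).mutilate A B) :=
  ⟨Set.subset_union_right, fun _ _ hab => ⟨.inr hab, (h.2.1 hab).2⟩,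
    fun _ _ hab => ⟨.inr hab, (h.2.2 hab).2⟩⟩

/-- Choosing the cut vertex `x` with no other cut vertex below it in `σ` keeps the whole directed
`σ`-path from `x` to a root inside the mutilated graph. -/
lemma dConnected_mutilate_of_exists_cut [Finite V] (hG : G.Acyclic)
    (hσG : σ.IsSubgraph (G.mutilate W ∅)) (hconn : σ.Connects X Y (W ∪ Z))
    (hroots : σ.roots ⊆ W ∪ Z ∪ Y) (hX : Disjoint X (W ∪ Z)) (hY : Disjoint Y (W ∪ Z))
    (hcut : (σ.verts ∩ (X \ (G.mutilate W ∅).AncSet Z)).Nonempty) :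
    (G.mutilate (W ∪ (X \ (G.mutilate W ∅).AncSet Z)) ∅).DConnected X Y (W ∪ Z) := by
  set A := W ∪ (X \ (G.mutilate W ∅).AncSet Z)
  have hσ : σ.Acyclic := hG.anti fun _ _ h => (hσG.2.1 h).1
  obtain ⟨x, ⟨hxσ, hxX, hxA⟩, hmax⟩ := hσ.wellFounded.has_min _ hcut
  obtain ⟨r, hr, hxr⟩ := hσ.exists_isRoot hxσ
  have hpath : ∀ b, ReflTransGen σ.dir x b →
      ReflTransGen (fun a b => (G.mutilate A ∅).dir a b ∧ a ∉ W ∪ Z) x b := by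
    intro b hxb
    induction hxb with
    | refl => exact .refl
    | tail hxa hab ih =>
      obtain ⟨hab', hbW, -⟩ := hσG.2.1 hab
      refine ih.tail ⟨⟨hab', ?_, Set.notMem_empty _⟩, hconn.not_mem_of_dir hab⟩
      rintro (hb | hb)
      exacts [hbW hb, hmax _ ⟨(σ.dir_mem hab).2, hb⟩ (TransGen.tail' hxa hab)]
  have hrY : r ∈ Y := by
    rcases hroots hr with (hrW | hrZ) | hrY
    · rcases hxr.cases_tail with rfl | ⟨_, -, h⟩
      exacts [absurd (Or.inl hrW) (Set.disjoint_left.1 hX hxX), absurd hrW (hσG.2.1 h).2.1]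
    · exact absurd ⟨r, hrZ, ReflTransGen.mono (fun _ _ h => hσG.2.1 h) _ _ hxr⟩ hxA
    · exact hrY
  exact dConnected_of_reflTransGen (hG.anti fun _ _ h => h.1) (hpath r hxr) hxX hrY
    (Set.disjoint_left.1 hX hxX) (Set.disjoint_left.1 hY hrY)

theorem dConnected_mutilate_of_connects [Finite V] (hG : G.Acyclic)
    (hσG : σ.IsSubgraph (G.mutilate W ∅)) (hσ : σ.Connected) (hconn : σ.Connects X Y (W ∪ Z))
    (hroots : σ.roots ⊆ W ∪ Z ∪ Y) (hX : Disjoint X (W ∪ Z)) (hY : Disjoint Y (W ∪ Z)) :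
    (G.mutilate (W ∪ (X \ (G.mutilate W ∅).AncSet Z)) ∅).DConnected X Y (W ∪ Z) := by
  by_cases hcut : (σ.verts ∩ (X \ (G.mutilate W ∅).AncSet Z)).Nonempty
  · exact dConnected_mutilate_of_exists_cut hG hσG hconn hroots hX hY hcut
  have hkeep : ∀ v ∈ σ.verts, v ∉ W → v ∉ W ∪ (X \ (G.mutilate W ∅).AncSet Z) :=
    fun v hv hvW hvA => hvA.elim hvW fun h => hcut ⟨v, hv, h⟩
  refine hconn.dConnected (hG.anti fun _ _ h => h.1) ⟨hσG.1, fun a b h => ?_, fun a b h => ?_⟩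
    hσ hroots hX hY
  · obtain ⟨hab, hbW, -⟩ := hσG.2.1 h
    exact ⟨hab, hkeep b (σ.dir_mem h).2 hbW, Set.notMem_empty a⟩
  · obtain ⟨hab, haW, hbW⟩ := hσG.2.2 h
    exact ⟨hab, hkeep a (σ.bi_mem h).1 haW, hkeep b (σ.bi_mem h).2 hbW⟩

end Mutilation

section Canonical

variable {C : Type*} [LinearOrder V] {π : V → C} {GC : MixedGraph C}

lemma dir_of_canonicalGraph_dir {a b : V} (h : (canonicalGraph π GC).dir a b) :
    GC.dir (π a) (π b) := by
  rcases h with ⟨-, h, -⟩ | ⟨-, h, -⟩ <;> exact h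

lemma dir_of_unfoldedGraph_dir {a b : V} (h : (unfoldedGraph π GC).dir a b) :
    GC.dir (π a) (π b) :=
  h.elim dir_of_canonicalGraph_dir And.left

lemma Compatible.exists_canonicalGraph_dir [Finite V] {G₀ : MixedGraph V}
    (hG₀ : Compatible π GC G₀) {a b : V} (hab : G₀.dir a b) :
    ∃ a' b', π a' = π a ∧ π b' = π b ∧ (canonicalGraph π GC).dir a' b' := by
  have hc : GC.dir (π a) (π b) := (hG₀.2.2.1 _ _).2 ⟨a, b, rfl, rfl, hab⟩
  by_cases hπ : π a = π b
  · rcases lt_or_gt_of_ne (fun h : a = b => hG₀.1.2.1 a (h ▸ hab)) with hlt | hlt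
    · exact ⟨a, b, rfl, rfl, .inl ⟨hπ, hc, hlt⟩⟩
    · rw [hπ] at hc
      exact ⟨b, a, hπ.symm, hπ, .inl ⟨hπ.symm, hπ ▸ hc, hlt⟩⟩
  · obtain ⟨a', ha' : π a' = π a, hmin⟩ :=
      Set.exists_min_image (clusterOf π (π a)) id (Set.toFinite _) ⟨a, rfl⟩
    obtain ⟨b', hb' : π b' = π b, hmax⟩ :=
      Set.exists_max_image (clusterOf π (π b)) id (Set.toFinite _) ⟨b, rfl⟩
    refine ⟨a', b', ha', hb', .inr ⟨?_, ?_, ?_, ?_⟩⟩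
    · rwa [ha', hb']
    · rwa [ha', hb']
    · rw [ha']
      exact ⟨ha', hmin⟩
    · rw [hb']
      exact ⟨hb', hmax⟩

theorem Compatible.canonicalGraph_union [Finite V] {G₀ : MixedGraph V}
    (hG₀ : Compatible π GC G₀) (hσdir : ∀ ⦃a b : V⦄, σ.dir a b → GC.dir (π a) (π b))
    (hσbi : ∀ ⦃a b : V⦄, σ.bi a b → (canonicalGraph π GC).bi a b)
    (hac : ((canonicalGraph π GC).union σ).Acyclic) :
    Compatible π GC ((canonicalGraph π GC).union σ) := by
  refine ⟨⟨hac, fun v h => hac h .refl, ?_⟩, Set.univ_union _, fun c d => ⟨fun h => ?_, ?_⟩,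
    fun c d => ⟨fun h => ?_, ?_⟩⟩
  · rintro v (h | h)
    exacts [h.1 rfl, (hσbi h).1 rfl]
  · obtain ⟨a, b, rfl, rfl, hab⟩ := (hG₀.2.2.1 c d).1 h
    obtain ⟨a', b', ha, hb, h'⟩ := hG₀.exists_canonicalGraph_dir hab
    exact ⟨a', b', ha, hb, .inl h'⟩
  · rintro ⟨a, b, rfl, rfl, h | h⟩
    exacts [dir_of_canonicalGraph_dir h, hσdir h]
  · obtain ⟨a, b, rfl, rfl, hab⟩ := (hG₀.2.2.2 c d).1 h
    exact ⟨a, b, rfl, rfl, .inl ⟨fun h => hG₀.1.2.2 a (h ▸ hab), h⟩⟩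
  · rintro ⟨a, b, rfl, rfl, h | h⟩
    exacts [h.2, (hσbi h).2]

end Canonical

end MixedGraph

open MixedGraph

theorem stmt14_general {V C : Type} [Fintype V] [LinearOrder V]
    (π : V → C)
    (GC : MixedGraph C)
    (hne : ∃ G : MixedGraph V, MixedGraph.Compatible π GC G)
    (WC XC YC ZC : Set C)
    (hWX : Disjoint WC XC) (hWY : Disjoint WC YC)
    (hXZ : Disjoint XC ZC) (hYZ : Disjoint YC ZC)
    (σ : MixedGraph V) (hσ : σ.IsSOI)
    (hsub : σ.IsSubgraph ((MixedGraph.unfoldedGraph π GC).mutilate (π ⁻¹' WC) ∅))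
    (hconn : σ.Connects (π ⁻¹' XC) (π ⁻¹' YC) ((π ⁻¹' WC) ∪ (π ⁻¹' ZC)))
    (hroots : σ.roots ⊆ (π ⁻¹' WC) ∪ (π ⁻¹' ZC) ∪ (π ⁻¹' YC))
    (hacyc : ((MixedGraph.canonicalGraph π GC).union σ).Acyclic) :
    ∃ G : MixedGraph V, MixedGraph.Compatible π GC G ∧
      (G.mutilate ((π ⁻¹' WC) ∪
          ((π ⁻¹' XC) \ (G.mutilate (π ⁻¹' WC) ∅).AncSet (π ⁻¹' ZC))) ∅).DConnected
        (π ⁻¹' XC) (π ⁻¹' YC) ((π ⁻¹' WC) ∪ (π ⁻¹' ZC)) := by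
  obtain ⟨G₀, hG₀⟩ := hne
  refine ⟨_, hG₀.canonicalGraph_union (fun _ _ h => dir_of_unfoldedGraph_dir (hsub.2.1 h).1)
    (fun _ _ h => (hsub.2.2 h).1) hacyc, ?_⟩
  exact dConnected_mutilate_of_connects hacyc hsub.mutilate_union hσ.2.1 hconn hroots
    ((hWX.symm.preimage π).union_right (hXZ.preimage π))
    ((hWY.symm.preimage π).union_right (hYZ.preimage π))

/-- rule 3, completeness direction: a suitable connecting
structure of interest in the mutilated unfolded graph yields a compatible
graph in which the third rule of Pearl's do-calculus fails. -/
theorem stmt14 {V C : Type} [Fintype V] [LinearOrder V]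
    (π : V → C) (hπ : Function.Surjective π)
    (GC : MixedGraph C) (hGCverts : GC.verts = Set.univ)
    (hne : ∃ G : MixedGraph V, MixedGraph.Compatible π GC G)
    (WC XC YC ZC : Set C)
    (hWX : Disjoint WC XC) (hWY : Disjoint WC YC) (hWZ : Disjoint WC ZC)
    (hXY : Disjoint XC YC) (hXZ : Disjoint XC ZC) (hYZ : Disjoint YC ZC)
    (σ : MixedGraph V) (hσ : σ.IsSOI)
    (hsub : σ.IsSubgraph ((MixedGraph.unfoldedGraph π GC).mutilate (π ⁻¹' WC) ∅))
    (hconn : σ.Connects (π ⁻¹' XC) (π ⁻¹' YC) ((π ⁻¹' WC) ∪ (π ⁻¹' ZC)))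
    (hroots : σ.roots ⊆ (π ⁻¹' WC) ∪ (π ⁻¹' ZC) ∪ (π ⁻¹' YC))
    (hacyc : ((MixedGraph.canonicalGraph π GC).union σ).Acyclic) :
    ∃ G : MixedGraph V, MixedGraph.Compatible π GC G ∧
      (G.mutilate ((π ⁻¹' WC) ∪
          ((π ⁻¹' XC) \ (G.mutilate (π ⁻¹' WC) ∅).AncSet (π ⁻¹' ZC))) ∅).DConnected
        (π ⁻¹' XC) (π ⁻¹' YC) ((π ⁻¹' WC) ∪ (π ⁻¹' ZC)) :=
  stmt14_general π GC hne WC XC YC ZC hWX hWY hXZ hYZ σ hσ hsub hconn hroots hacyc
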